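/- arXiv:math/0607638 — 2 statements merged into one kernel-verified Lean document; each statement's English description precedes it below -/
import Mathlib

section
/- Let k be an algebraically closed field of characteristic zero. The minimal primes of the ideal J_m ⊆ R are exactly the ideals P(m;t_1,…,t_r) where t_1,…,t_r are nonnegative integers with 0 ≤ t_i ≤ m+1 and t_1+⋯+t_r = m+1. -/
/-- The polynomial ring `R = k[x_i^(j) : 1 ≤ i ≤ n, 0 ≤ j ≤ m]` in `n(m+1)` variables;
the variable `x_i^(j)` is `MvPolynomial.X (i, j)`. -/
abbrev JetRing (k : Type*) [Field k] (m n : ℕ) : Type _ :=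
  MvPolynomial (Fin n × Fin (m + 1)) k

/-- `jetGen k m n r hrn j` is the generator `g_j`, i.e. the coefficient of `t^j` in the
product `∏_{i=1}^{r} (x_i^(0) + x_i^(1) t + ⋯ + x_i^(m) t^m)`. -/
noncomputable def jetGen (k : Type*) [Field k] (m n r : ℕ) (hrn : r ≤ n) (j : ℕ) :
    JetRing k m n :=
  Polynomial.coeff
    (∏ i : Fin r, ∑ l : Fin (m + 1),
      Polynomial.C (MvPolynomial.X (Fin.castLE hrn i, l)) * Polynomial.X ^ (l : ℕ)) j

/-- The ideal `J_m = (g_0, …, g_m)` defining the `m`-th jet scheme of `x_1 ⋯ x_r = 0`. -/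
noncomputable def jetIdeal (k : Type*) [Field k] (m n r : ℕ) (hrn : r ≤ n) :
    Ideal (JetRing k m n) :=
  Ideal.span (jetGen k m n r hrn '' Set.Iic m)

/-- The ideal `P(m; t_1, …, t_r) = (x_i^(j) : 1 ≤ i ≤ r, 0 ≤ j ≤ t_i - 1)`. -/
noncomputable def compPrime (k : Type*) [Field k] (m n r : ℕ) (hrn : r ≤ n)
    (t : Fin r → ℕ) : Ideal (JetRing k m n) :=
  Ideal.span {p | ∃ (i : Fin r) (j : Fin (m + 1)), (j : ℕ) < t i ∧
    p = MvPolynomial.X (Fin.castLE hrn i, j)}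

/-- The length of a module, valued in `ℕ∞`: the supremum of lengths of strictly
increasing chains of submodules. -/
noncomputable def moduleLength (R M : Type*) [Ring R] [AddCommGroup M] [Module R M] : ℕ∞ :=
  Order.height (⊤ : Submodule R M)

/-!
Let `Q ⊇ J_m` be prime and `D = R ⧸ Q`. In the domain `D[t]` the product of the jets
`x_i(t) = x_i^(0) + ⋯ + x_i^(m) t^m` is divisible by `t^(m+1)`, and `t` is a prime element, so
`t^(t_i) ∣ x_i(t)` for exponents with `t_1 + ⋯ + t_r = m + 1`; that is, `P(m; t) ⊆ Q`.
Conversely every such `P(m; t)` contains `J_m`, and two of them are comparable only if the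
exponents agree, so they are exactly the minimal primes.
-/

open Polynomial

theorem Prime.exists_sum_eq_of_pow_dvd_prod {α ι : Type*} [CommMonoidWithZero α]
    [IsCancelMulZero α] {p : α} (hp : Prime p) (s : Finset ι) (f : ι → α) {N : ℕ}
    (h : p ^ N ∣ ∏ i ∈ s, f i) :
    ∃ t : ι → ℕ, ∑ i ∈ s, t i = N ∧ ∀ i ∈ s, p ^ t i ∣ f i := by
  classical
  induction N with
  | zero => exact ⟨0, by simp, by simp⟩
  | succ N ih =>
    obtain ⟨t, ht, hdvd⟩ := ih ((pow_dvd_pow p N.le_succ).trans h)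
    choose! g hg using hdvd
    have hprod : ∏ i ∈ s, f i = p ^ N * ∏ i ∈ s, g i := by
      rw [Finset.prod_congr rfl hg, Finset.prod_mul_distrib, Finset.prod_pow_eq_pow_sum, ht]
    -- Cancelling `p ^ N`, the prime `p` divides the product of the cofactors, hence one of them.
    obtain ⟨j, hj, hpj⟩ : ∃ j ∈ s, p ∣ g j := by
      rw [← hp.dvd_finsetProd_iff, ← mul_dvd_mul_iff_left (pow_ne_zero N hp.ne_zero), ← pow_succ,
        ← hprod]
      exact h
    refine ⟨t + Pi.single j 1, ?_, fun i hi => ?_⟩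
    · simp [Finset.sum_add_distrib, Finset.sum_pi_single', hj, ht]
    · rw [hg i hi, Pi.add_apply, pow_add]
      refine mul_dvd_mul_left _ ?_
      obtain rfl | hij := eq_or_ne i j
      · simpa using hpj
      · simp [hij]

theorem Ideal.minimalPrimes_eq_of_isAntichain {R : Type*} [CommSemiring R] {I : Ideal R}
    {S : Set (Ideal R)} (hprime : ∀ P ∈ S, P.IsPrime) (hle : ∀ P ∈ S, I ≤ P)
    (hcover : ∀ Q : Ideal R, Q.IsPrime → I ≤ Q → ∃ P ∈ S, P ≤ Q)
    (hanti : IsAntichain (· ≤ ·) S) :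
    I.minimalPrimes = S := by
  ext Q
  constructor
  · rintro ⟨⟨hQ, hIQ⟩, hmin⟩
    obtain ⟨P, hP, hPQ⟩ := hcover Q hQ hIQ
    rwa [le_antisymm (hmin ⟨hprime P hP, hle P hP⟩ hPQ) hPQ]
  · intro hQ
    refine ⟨⟨hprime Q hQ, hle Q hQ⟩, fun q ⟨hq, hIq⟩ hqQ => ?_⟩
    obtain ⟨P, hP, hPq⟩ := hcover q hq hIq
    rwa [← hanti.eq hP hQ (hPq.trans hqQ)]

namespace MvPolynomial

variable {R σ : Type*} [CommRing R] [IsDomain R]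

theorem isPrime_span_X_image (s : Set σ) :
    (Ideal.span (X '' s : Set (MvPolynomial σ R))).IsPrime := by
  classical
  set I := Ideal.span (X '' s : Set (MvPolynomial σ R))
  let φ : MvPolynomial σ R →ₐ[R] MvPolynomial σ R := aeval fun i => if i ∈ s then 0 else X i
  have hφ : (Ideal.Quotient.mkₐ R I).comp φ = Ideal.Quotient.mkₐ R I := by
    refine algHom_ext fun i => ?_
    by_cases hi : i ∈ s
    · have hXi : X i ∈ I := Ideal.subset_span ⟨i, hi, rfl⟩
      simp [φ, hi, Ideal.Quotient.eq_zero_iff_mem.2 hXi]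
    · simp [φ, hi]
  have hker : I = RingHom.ker φ := by
    refine le_antisymm (Ideal.span_le.2 ?_) fun p hp => ?_
    · rintro _ ⟨i, hi, rfl⟩
      simp [φ, hi]
    · rw [← Ideal.Quotient.eq_zero_iff_mem, ← Ideal.Quotient.mkₐ_eq_mk R, ← hφ, AlgHom.comp_apply,
        show φ p = 0 from hp, map_zero]
  rw [hker]
  exact RingHom.ker_isPrime φ

omit [IsDomain R] in
theorem X_mem_span_X_image_iff [Nontrivial R] {s : Set σ} {v : σ} :
    (X v : MvPolynomial σ R) ∈ Ideal.span (X '' s) ↔ v ∈ s := by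
  classical
  rw [mem_ideal_span_X_image]
  simp [support_X, Finsupp.single_apply]

end MvPolynomial

theorem Polynomial.coeff_sum_fin_C_mul_X_pow {A : Type*} [Semiring A] {N : ℕ} (c : Fin N → A)
    (d : ℕ) : (∑ l : Fin N, C (c l) * X ^ (l : ℕ)).coeff d = if h : d < N then c ⟨d, h⟩ else 0 := by
  simp only [finsetSum_coeff, coeff_C_mul_X_pow]
  split_ifs with h
  · rw [Finset.sum_eq_single ⟨d, h⟩] <;> simp +contextual [Fin.ext_iff, eq_comm]
  · exact Finset.sum_eq_zero fun l _ => if_neg (by omega)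

section jet

variable {k : Type*} [Field k] {m n r : ℕ} {hrn : r ≤ n}

/-- The generic `m`-jet `x_i^(0) + x_i^(1) t + ⋯ + x_i^(m) t^m` of the coordinate `x_i`. -/
noncomputable def coordJet (k : Type*) [Field k] (m : ℕ) {n r : ℕ} (hrn : r ≤ n) (i : Fin r) :
    (JetRing k m n)[X] :=
  ∑ l : Fin (m + 1), C (MvPolynomial.X (Fin.castLE hrn i, l)) * X ^ (l : ℕ)

theorem coeff_coordJet (i : Fin r) (d : ℕ) :
    (coordJet k m hrn i).coeff d =
      if h : d < m + 1 then MvPolynomial.X (Fin.castLE hrn i, ⟨d, h⟩) else 0 :=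
  coeff_sum_fin_C_mul_X_pow _ d

theorem jetIdeal_le_iff (Q : Ideal (JetRing k m n)) :
    jetIdeal k m n r hrn ≤ Q ↔
      X ^ (m + 1) ∣ (∏ i, coordJet k m hrn i).map (Ideal.Quotient.mk Q) := by
  simp only [jetIdeal, Ideal.span_le, Set.image_subset_iff, X_pow_dvd_iff, coeff_map,
    Ideal.Quotient.eq_zero_iff_mem, Nat.lt_succ_iff]
  rfl

theorem compPrime_le_iff (Q : Ideal (JetRing k m n)) (t : Fin r → ℕ) :
    compPrime k m n r hrn t ≤ Q ↔
      ∀ i, X ^ t i ∣ (coordJet k m hrn i).map (Ideal.Quotient.mk Q) := by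
  simp only [compPrime, Ideal.span_le, X_pow_dvd_iff, coeff_map, coeff_coordJet]
  constructor
  · intro h i d hd
    split_ifs with hdm
    · exact Ideal.Quotient.eq_zero_iff_mem.2 (h ⟨i, ⟨d, hdm⟩, hd, rfl⟩)
    · exact map_zero _
  · rintro h _ ⟨i, j, hj, rfl⟩
    simpa [j.is_le, Ideal.Quotient.eq_zero_iff_mem] using h i j hj

theorem jetIdeal_le_compPrime {t : Fin r → ℕ} (ht : ∑ i, t i = m + 1) :
    jetIdeal k m n r hrn ≤ compPrime k m n r hrn t := by
  rw [jetIdeal_le_iff, Polynomial.map_prod]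
  calc X ^ (m + 1) = ∏ i, X ^ t i := by rw [Finset.prod_pow_eq_pow_sum, ht]
    _ ∣ _ := Finset.prod_dvd_prod_of_dvd _ _ fun i _ => (compPrime_le_iff _ t).1 le_rfl i

theorem exists_compPrime_le (Q : Ideal (JetRing k m n)) [Q.IsPrime]
    (hQ : jetIdeal k m n r hrn ≤ Q) :
    ∃ t : Fin r → ℕ, ∑ i, t i = m + 1 ∧ compPrime k m n r hrn t ≤ Q := by
  rw [jetIdeal_le_iff, Polynomial.map_prod] at hQ
  obtain ⟨t, ht, hdvd⟩ := prime_X.exists_sum_eq_of_pow_dvd_prod _ _ hQ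
  exact ⟨t, ht, (compPrime_le_iff Q t).2 fun i => hdvd i (Finset.mem_univ i)⟩

def compPrimeVars (m : ℕ) {n r : ℕ} (hrn : r ≤ n) (t : Fin r → ℕ) : Set (Fin n × Fin (m + 1)) :=
  {v | ∃ (i : Fin r) (j : Fin (m + 1)), (j : ℕ) < t i ∧ v = (Fin.castLE hrn i, j)}

theorem compPrime_eq_span_X_image (t : Fin r → ℕ) :
    compPrime k m n r hrn t = Ideal.span (MvPolynomial.X '' compPrimeVars m hrn t) := by
  rw [compPrime]
  congr 1
  ext p
  simp only [compPrimeVars, Set.mem_image, Set.mem_ofPred_eq]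
  aesop

theorem compPrime_isPrime (t : Fin r → ℕ) : (compPrime k m n r hrn t).IsPrime := by
  rw [compPrime_eq_span_X_image]
  exact MvPolynomial.isPrime_span_X_image _

theorem X_mem_compPrime_iff {t : Fin r → ℕ} {i : Fin r} {j : Fin (m + 1)} :
    MvPolynomial.X (Fin.castLE hrn i, j) ∈ compPrime k m n r hrn t ↔ (j : ℕ) < t i := by
  simp [compPrime_eq_span_X_image, MvPolynomial.X_mem_span_X_image_iff, compPrimeVars]

theorem eq_of_compPrime_le {s t : Fin r → ℕ} (hs : ∀ i, s i ≤ m + 1)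
    (hst : ∑ i, s i = ∑ i, t i) (h : compPrime k m n r hrn s ≤ compPrime k m n r hrn t) :
    s = t := by
  have hle : ∀ i, s i ≤ t i := fun i => by
    by_contra! hlt
    have hX := h ((X_mem_compPrime_iff (j := ⟨t i, hlt.trans_le (hs i)⟩)).2 hlt)
    exact (X_mem_compPrime_iff.1 hX).false
  funext i
  exact (Finset.sum_eq_sum_iff_of_le fun i _ => hle i).1 hst i (Finset.mem_univ i)

end jet

theorem minimalPrimes_jetIdeal_general
    (k : Type*) [Field k]
    (m n r : ℕ) (hrn : r ≤ n) :
    (jetIdeal k m n r hrn).minimalPrimes =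
      {Q | ∃ t : Fin r → ℕ, (∀ i, t i ≤ m + 1) ∧ (∑ i, t i = m + 1) ∧
        Q = compPrime k m n r hrn t} := by
  refine Ideal.minimalPrimes_eq_of_isAntichain ?_ ?_ ?_ ?_
  · rintro _ ⟨t, -, -, rfl⟩
    exact compPrime_isPrime t
  · rintro _ ⟨t, -, ht, rfl⟩
    exact jetIdeal_le_compPrime ht
  · intro Q hQ hJQ
    obtain ⟨t, ht, htQ⟩ := exists_compPrime_le Q hJQ
    exact ⟨_, ⟨t, fun i => ht ▸ Finset.single_le_sum (by simp) (Finset.mem_univ i), ht, rfl⟩, htQ⟩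
  · rintro _ ⟨s, hs, hsum, rfl⟩ _ ⟨t, -, htsum, rfl⟩ hne hle
    exact hne (congrArg _ (eq_of_compPrime_le hs (hsum.trans htsum.symm) hle))

/-- **Goward–Smith.** Over an algebraically closed field of characteristic zero, the
minimal primes of `J_m` are exactly the ideals `P(m; t_1, …, t_r)` with
`0 ≤ t_i ≤ m + 1` and `t_1 + ⋯ + t_r = m + 1`. -/
theorem minimalPrimes_jetIdeal
    (k : Type*) [Field k] [IsAlgClosed k] [CharZero k]
    (m n r : ℕ) (hr : 1 ≤ r) (hrn : r ≤ n) :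
    (jetIdeal k m n r hrn).minimalPrimes =
      {Q | ∃ t : Fin r → ℕ, (∀ i, t i ≤ m + 1) ∧ (∑ i, t i = m + 1) ∧
        Q = compPrime k m n r hrn t} :=
  minimalPrimes_jetIdeal_general k m n r hrn
end

section
/- Let R be a commutative ring and x_1,…,x_r nonunits in R. If the product x_1⋯x_r is a nonzerodivisor on R, then ℓ(R/(x_1⋯x_r)) = Σ_{i=1}^r ℓ(R/(x_i)), where ℓ denotes length as an R-module (valued in ℕ ∪ {∞}). -/
open scoped nonZeroDivisors

theorem moduleLength_eq_length (R M : Type*) [Ring R] [AddCommGroup M] [Module R M] :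
    moduleLength R M = Module.length R M :=
  (Module.length_eq_height R M).symm

namespace Module

open Ideal

variable {R : Type*} [CommRing R]

theorem length_quotient_span_mul (a : R) {b : R} (hb : b ∈ R⁰) :
    length R (R ⧸ span {a * b}) = length R (R ⧸ span {a}) + length R (R ⧸ span {b}) := by
  let N : Submodule R (R ⧸ span {a * b}) := Submodule.map (span {a * b}).mkQ (span {b})
  let f : R →ₗ[R] R ⧸ span {a * b} := (span {a * b}).mkQ ∘ₗ LinearMap.toSpanSingleton R R b
  have hker : LinearMap.ker f = span {a} := by
    ext r
    simp only [f, LinearMap.mem_ker, LinearMap.comp_apply, LinearMap.toSpanSingleton_apply,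
      Submodule.mkQ_apply, Submodule.Quotient.mk_eq_zero, smul_eq_mul, mem_span_singleton,
      dvd_cancel_right_mem_nonZeroDivisors hb]
  have hrange : LinearMap.range f = N := by
    rw [LinearMap.range_comp, LinearMap.range_toSpanSingleton]
  have eN : (R ⧸ span {a}) ≃ₗ[R] N :=
    (Submodule.quotEquivOfEq _ _ hker.symm).trans
      (f.quotKerEquivRange.trans (LinearEquiv.ofEq _ _ hrange))
  have eQ : ((R ⧸ span {a * b}) ⧸ N) ≃ₗ[R] R ⧸ span {b} :=
    Submodule.quotientQuotientEquivQuotient _ _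
      (span_singleton_le_span_singleton.2 (dvd_mul_left b a))
  rw [length_eq_add_of_exact N.subtype N.mkQ N.injective_subtype N.mkQ_surjective
    (LinearMap.exact_subtype_mkQ N), eN.length_eq, eQ.length_eq]

theorem length_quotient_span_prod {ι : Type*} (x : ι → R) (s : Finset ι)
    (hs : ∏ i ∈ s, x i ∈ R⁰) :
    length R (R ⧸ span {∏ i ∈ s, x i}) = ∑ i ∈ s, length R (R ⧸ span {x i}) := by
  classical
  induction s using Finset.induction_on with
  | empty =>
    rw [Finset.prod_empty, span_singleton_one, Finset.sum_empty]
    exact length_eq_zero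
  | insert i s hi ih =>
    rw [Finset.prod_insert hi] at hs ⊢
    have hs' := (mul_mem_nonZeroDivisors.1 hs).2
    rw [Finset.sum_insert hi, length_quotient_span_mul _ hs', ih hs']

end Module

theorem length_quotient_prod_eq_sum_general
    (R : Type*) [CommRing R] (r : ℕ) (x : Fin r → R)
    (hnzd : (∏ i, x i) ∈ nonZeroDivisors R) :
    moduleLength R (R ⧸ Ideal.span {∏ i, x i}) =
      ∑ i, moduleLength R (R ⧸ Ideal.span {x i}) := by
  simp only [moduleLength_eq_length]
  exact Module.length_quotient_span_prod x _ hnzd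

/-- If `x_1, …, x_r` are nonunits of a commutative ring `R` whose product is a
nonzerodivisor on `R`, then `ℓ(R/(x_1⋯x_r)) = Σ_{i=1}^r ℓ(R/(x_i))`. -/
theorem length_quotient_prod_eq_sum
    (R : Type*) [CommRing R] (r : ℕ) (x : Fin r → R)
    (hnu : ∀ i, ¬ IsUnit (x i)) (hnzd : (∏ i, x i) ∈ nonZeroDivisors R) :
    moduleLength R (R ⧸ Ideal.span {∏ i, x i}) =
      ∑ i, moduleLength R (R ⧸ Ideal.span {x i}) :=
  length_quotient_prod_eq_sum_general R r x hnzd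
end
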